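/- Let m ≥ 1, let x_1 < x_2 < … < x_m < 0 be real numbers, set x_{m+1} = 0, and let λ_1, …, λ_m ∈ ℝ. For k = 1, …, m define the Möbius transformation T_k(x) = ((1 − (λ_k/2)x_k)x + (λ_k/2)x_k²)/(−(λ_k/2)x + 1 + (λ_k/2)x_k) (which has determinant 1 and satisfies T_k(x_k) = x_k, T_k′(x_k) = 1, T_k''(x_k) = λ_k), and set φ̃_0 = id, φ̃_k = φ̃_{k−1}∘T_k (a real Möbius transformation). Then the following are equivalent: (i) for every k = 1, …, m, the Möbius transformation φ̃_k has no pole in [x_k, x_{k+1}]; (ii) for every k = 1, …, m, φ̃_{k−1} is finite at x_k and λ_k < 2/(x_{k+1} − x_k) − φ̃_{k−1}''(x_k)/φ̃_{k−1}′(x_k). Moreover, if these conditions hold, the map φ̃ : (−∞, 0] → ℝ defined by φ̃(x) = x for x ≤ x_1 and φ̃(x) = φ̃_k(x) for x ∈ [x_k, x_{k+1}] is well defined, continuously differentiable, and strictly increasing. -/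

import Mathlib

open Set Matrix

/-- The matrix of the Möbius transformation
`T_k(x) = ((1 − (λ_k/2)x_k)x + (λ_k/2)x_k²)/(−(λ_k/2)x + 1 + (λ_k/2)x_k)`
(it has determinant `1` and satisfies `T_k(x_k) = x_k`, `T_k′(x_k) = 1`,
`T_k''(x_k) = λ_k`). -/
noncomputable def Tmat (lam x : ℕ → ℝ) (k : ℕ) : Matrix (Fin 2) (Fin 2) ℝ :=
  !![1 - (lam k / 2) * x k, (lam k / 2) * (x k) ^ 2;
     -(lam k / 2), 1 + (lam k / 2) * x k]

/-- The matrix of `φ̃_k = φ̃_{k−1} ∘ T_k`, with `φ̃_0 = id`. -/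
noncomputable def Phimat (lam x : ℕ → ℝ) : ℕ → Matrix (Fin 2) (Fin 2) ℝ
  | 0 => 1
  | k + 1 => Phimat lam x k * Tmat lam x (k + 1)

/-- Evaluation of the Möbius transformation associated with a `2 × 2` real matrix. -/
noncomputable def mev (M : Matrix (Fin 2) (Fin 2) ℝ) (t : ℝ) : ℝ :=
  (M 0 0 * t + M 0 1) / (M 1 0 * t + M 1 1)

/-!
Each `T_k` fixes `x_k` with derivative `1`. Hence if `c t + d` is the denominator of `φ̃_{k-1}`
and `D = c x_k + d`, then `φ̃_k` takes the value of `φ̃_{k-1}` at `x_k` and its denominator is the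
affine function `t ↦ c t + d - (λ_k/2)(t - x_k) D`, which equals `D` at `x_k`. An affine function
has no zero on `[x_k, x_{k+1}]` iff its values at the two ends have positive product; as the
pre-Schwarzian of `φ̃_{k-1}` at `x_k` is `-2c/D`, this product is `(x_{k+1} - x_k) D² / 2` times
the slack in the inequality of (ii). All the matrices have determinant `1`, so on each piece the
derivative is `1 / den² > 0`, and neighbouring pieces agree to first order at the junctions;
hence the glued map is `C¹` and strictly increasing.
-/
namespace PiecewiseMobius

noncomputable def mden (M : Matrix (Fin 2) (Fin 2) ℝ) (t : ℝ) : ℝ := M 1 0 * t + M 1 1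

noncomputable def mnum (M : Matrix (Fin 2) (Fin 2) ℝ) (t : ℝ) : ℝ := M 0 0 * t + M 0 1

lemma mev_eq_div (M : Matrix (Fin 2) (Fin 2) ℝ) (t : ℝ) : mev M t = mnum M t / mden M t := rfl

lemma mden_one (t : ℝ) : mden 1 t = 1 := by simp [mden]

lemma mev_one (t : ℝ) : mev 1 t = t := by simp [mev]

section Tmat

variable (lam x : ℕ → ℝ) (k : ℕ)

lemma det_Tmat : (Tmat lam x k).det = 1 := by
  rw [Tmat, Matrix.det_fin_two_of]; ring

lemma det_Phimat : (Phimat lam x k).det = 1 := by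
  induction k with
  | zero => simp [Phimat]
  | succ k ih => rw [Phimat, Matrix.det_mul, ih, det_Tmat, mul_one]

variable (P : Matrix (Fin 2) (Fin 2) ℝ) (t : ℝ)

lemma mden_mul_Tmat :
    mden (P * Tmat lam x k) t = mden P t - lam k / 2 * (t - x k) * mden P (x k) := by
  simp only [mden, Tmat, Matrix.mul_apply, Fin.sum_univ_two, of_apply, cons_val', cons_val_zero,
    cons_val_one, cons_val_fin_one]
  ring

lemma mnum_mul_Tmat :
    mnum (P * Tmat lam x k) t = mnum P t - lam k / 2 * (t - x k) * mnum P (x k) := by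
  simp only [mnum, Tmat, Matrix.mul_apply, Fin.sum_univ_two, of_apply, cons_val', cons_val_zero,
    cons_val_one, cons_val_fin_one]
  ring

lemma mden_mul_Tmat_self : mden (P * Tmat lam x k) (x k) = mden P (x k) := by
  simp [mden_mul_Tmat]

lemma mev_mul_Tmat_self : mev (P * Tmat lam x k) (x k) = mev P (x k) := by
  simp [mev_eq_div, mden_mul_Tmat, mnum_mul_Tmat]

end Tmat

section Derivatives

variable {M : Matrix (Fin 2) (Fin 2) ℝ} {t : ℝ}

lemma hasDerivAt_mden (M : Matrix (Fin 2) (Fin 2) ℝ) (t : ℝ) :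
    HasDerivAt (mden M) (M 1 0) t :=
  (((hasDerivAt_id' t).const_mul (M 1 0)).add_const (M 1 1)).congr_deriv (mul_one _)

lemma hasDerivAt_mev (h : mden M t ≠ 0) : HasDerivAt (mev M) (M.det / mden M t ^ 2) t := by
  have hnum : HasDerivAt (mnum M) (M 0 0) t :=
    (((hasDerivAt_id' t).const_mul (M 0 0)).add_const (M 0 1)).congr_deriv (mul_one _)
  have hdet : M.det = M 0 0 * mden M t - mnum M t * M 1 0 := by
    rw [Matrix.det_fin_two]; simp only [mnum, mden]; ring
  rw [hdet]
  exact hnum.div (hasDerivAt_mden M t) h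

lemma deriv_deriv_mev (h : mden M t ≠ 0) :
    deriv (deriv (mev M)) t = -2 * M.det * M 1 0 / mden M t ^ 3 := by
  have hderiv : deriv (mev M) =ᶠ[nhds t] fun s => M.det / mden M s ^ 2 :=
    ((hasDerivAt_mden M t).continuousAt.eventually_ne h).mono fun s hs =>
      (hasDerivAt_mev hs).deriv
  have hsq : HasDerivAt (fun s => mden M s ^ 2) (2 * mden M t * M 1 0) t := by
    simpa using (hasDerivAt_mden M t).fun_pow 2
  rw [hderiv.deriv_eq, ((hasDerivAt_const t M.det).fun_div hsq (pow_ne_zero 2 h)).deriv]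
  field_simp
  ring

lemma deriv_deriv_mev_div_deriv_mev (hdet : M.det ≠ 0) (h : mden M t ≠ 0) :
    deriv (deriv (mev M)) t / deriv (mev M) t = -2 * M 1 0 / mden M t := by
  rw [deriv_deriv_mev h, (hasDerivAt_mev h).deriv]
  field_simp

end Derivatives

lemma forall_mul_add_ne_zero_Icc_iff {a b c d : ℝ} (hab : a ≤ b) :
    (∀ t ∈ Icc a b, c * t + d ≠ 0) ↔ 0 < (c * a + d) * (c * b + d) := by
  constructor
  · intro h
    by_contra! hle
    have hzero_mem : (0 : ℝ) ∈ uIcc (c * a + d) (c * b + d) := by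
      rcases mul_nonpos_iff.1 hle with h | h
      · exact Set.mem_uIcc.2 (Or.inr ⟨h.2, h.1⟩)
      · exact Set.mem_uIcc.2 (Or.inl ⟨h.1, h.2⟩)
    obtain ⟨t, ht, hzero⟩ :=
      intermediate_value_uIcc (f := fun t => c * t + d) (by fun_prop) hzero_mem
    rw [uIcc_of_le hab] at ht
    exact h t ht hzero
  · rintro hpos t ⟨hat, htb⟩ hzero
    have hd : d = -(c * t) := by linarith
    subst hd
    nlinarith [sq_nonneg c, mul_nonneg (sub_nonneg.2 hat) (sub_nonneg.2 htb)]

lemma forall_mden_mul_Tmat_ne_zero_iff {lam x : ℕ → ℝ} {k : ℕ} {P : Matrix (Fin 2) (Fin 2) ℝ}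
    (hP : P.det ≠ 0) {b : ℝ} (hb : x k < b) :
    (∀ t ∈ Icc (x k) b, mden (P * Tmat lam x k) t ≠ 0) ↔
      mden P (x k) ≠ 0 ∧
        lam k < 2 / (b - x k) - deriv (deriv (mev P)) (x k) / deriv (mev P) (x k) := by
  refine (forall_mul_add_ne_zero_Icc_iff hb.le).trans ?_
  change 0 < mden (P * Tmat lam x k) (x k) * mden (P * Tmat lam x k) b ↔ _
  have hend : mden (P * Tmat lam x k) b =
      mden P (x k) + P 1 0 * (b - x k) - lam k / 2 * (b - x k) * mden P (x k) := by
    rw [mden_mul_Tmat]; simp only [mden]; ring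
  rw [mden_mul_Tmat_self, hend]
  by_cases hD : mden P (x k) = 0
  · simp [hD]
  rw [deriv_deriv_mev_div_deriv_mev hP hD]
  set D := mden P (x k)
  have hΔ : 0 < b - x k := sub_pos.2 hb
  have key : D * (D + P 1 0 * (b - x k) - lam k / 2 * (b - x k) * D) =
      (b - x k) * D ^ 2 / 2 * (2 / (b - x k) - -2 * P 1 0 / D - lam k) := by
    field_simp; ring
  rw [key, mul_pos_iff_of_pos_left (by positivity), sub_pos]
  exact (and_iff_right hD).symm

structure HasPosContDerivOn (f f' : ℝ → ℝ) (s : Set ℝ) : Prop where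
  hasDerivWithinAt : ∀ t ∈ s, HasDerivWithinAt f (f' t) s t
  continuousOn : ContinuousOn f' s
  pos : ∀ t ∈ s, 0 < f' t

namespace HasPosContDerivOn

variable {f f' g g' : ℝ → ℝ} {s u : Set ℝ}

lemma congr (h : HasPosContDerivOn f f' s) (hg : EqOn g f s) (hg' : EqOn g' f' s) :
    HasPosContDerivOn g g' s where
  hasDerivWithinAt t ht := hg' ht ▸ (h.hasDerivWithinAt t ht).congr_of_mem hg ht
  continuousOn := h.continuousOn.congr hg'
  pos t ht := hg' ht ▸ h.pos t ht

lemma union (hs : IsClosed s) (hu : IsClosed u) (h₁ : HasPosContDerivOn f f' s)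
    (h₂ : HasPosContDerivOn f f' u) : HasPosContDerivOn f f' (s ∪ u) where
  hasDerivWithinAt t _ := by
    classical
    have extend {v : Set ℝ} (hv : IsClosed v) (h : ∀ t ∈ v, HasDerivWithinAt f (f' t) v t) :
        HasDerivWithinAt f (f' t) v t :=
      if ht : t ∈ v then h t ht
      else hasDerivWithinAt_iff_hasFDerivWithinAt.2 (.of_notMem_closure (by rwa [hv.closure_eq]))
    exact (extend hs h₁.hasDerivWithinAt).union (extend hu h₂.hasDerivWithinAt)
  continuousOn := h₁.continuousOn.union_of_isClosed h₂.continuousOn hs hu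
  pos t ht := ht.elim (h₁.pos t) (h₂.pos t)

lemma contDiffOn (h : HasPosContDerivOn f f' s) (hs : UniqueDiffOn ℝ s) : ContDiffOn ℝ 1 f s :=
  (contDiffOn_one_iff_derivWithin hs).2
    ⟨fun t ht => (h.hasDerivWithinAt t ht).differentiableWithinAt,
      h.continuousOn.congr fun t ht => (h.hasDerivWithinAt t ht).derivWithin (hs t ht)⟩

lemma strictMonoOn (h : HasPosContDerivOn f f' s) (hs : Convex ℝ s) : StrictMonoOn f s :=
  strictMonoOn_of_hasDerivWithinAt_pos hs
    (fun t ht => (h.hasDerivWithinAt t ht).continuousWithinAt)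
    (fun t ht => (h.hasDerivWithinAt t (interior_subset ht)).mono interior_subset)
    (fun t ht => h.pos t (interior_subset ht))

end HasPosContDerivOn

lemma hasPosContDerivOn_mev {M : Matrix (Fin 2) (Fin 2) ℝ} {s : Set ℝ} (hdet : 0 < M.det)
    (h : ∀ t ∈ s, mden M t ≠ 0) :
    HasPosContDerivOn (mev M) (fun t => M.det / mden M t ^ 2) s where
  hasDerivWithinAt t ht := (hasDerivAt_mev (h t ht)).hasDerivWithinAt
  continuousOn := by
    have hcont : Continuous (mden M) :=
      continuous_iff_continuousAt.2 fun t => (hasDerivAt_mden M t).continuousAt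
    exact continuousOn_const.div (hcont.pow 2).continuousOn fun t ht => pow_ne_zero 2 (h t ht)
  pos t ht := by
    have := h t ht
    positivity

noncomputable def glue (x : ℕ → ℝ) (g : ℕ → ℝ → ℝ) : ℕ → ℝ → ℝ
  | 0 => g 0
  | n + 1 => fun t => if t < x (n + 1) then glue x g n t else g (n + 1) t

section Glue

variable {x : ℕ → ℝ} {g : ℕ → ℝ → ℝ} {n : ℕ}

lemma glue_succ_of_le {t : ℝ} (ht : x (n + 1) ≤ t) : glue x g (n + 1) t = g (n + 1) t :=
  if_neg (not_lt.2 ht)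

lemma glue_succ_eqOn_Iic (hx : MonotoneOn x (Icc 1 (n + 1)))
    (hg : ∀ k, g k (x (k + 1)) = g (k + 1) (x (k + 1))) :
    EqOn (glue x g (n + 1)) (glue x g n) (Iic (x (n + 1))) := by
  intro t ht
  rcases (mem_Iic.1 ht).lt_or_eq with hlt | rfl
  · exact if_pos hlt
  rw [glue_succ_of_le le_rfl, ← hg]
  cases n with
  | zero => rfl
  | succ n =>
    exact (glue_succ_of_le (hx ⟨le_add_self, by omega⟩ ⟨by omega, le_rfl⟩ (by omega))).symm

lemma glue_eqOn_Iic_of_le {k : ℕ} (hkn : k ≤ n) (hx : MonotoneOn x (Icc 1 (n + 1)))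
    (hg : ∀ k, g k (x (k + 1)) = g (k + 1) (x (k + 1))) :
    EqOn (glue x g n) (glue x g k) (Iic (x (k + 1))) := by
  induction n, hkn using Nat.le_induction with
  | base => exact eqOn_refl _ _
  | succ n hkn ih =>
    intro t ht
    have hx' : MonotoneOn x (Icc 1 (n + 1)) := hx.mono (Icc_subset_Icc_right (by omega))
    have htn : t ≤ x (n + 1) :=
      (mem_Iic.1 ht).trans (hx' ⟨by omega, by omega⟩ ⟨by omega, le_rfl⟩ (by omega))
    rw [glue_succ_eqOn_Iic hx' hg htn, ih hx' ht]

lemma glue_eq_of_le_one (hx : MonotoneOn x (Icc 1 (n + 1)))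
    (hg : ∀ k, g k (x (k + 1)) = g (k + 1) (x (k + 1))) {t : ℝ} (ht : t ≤ x 1) :
    glue x g n t = g 0 t :=
  glue_eqOn_Iic_of_le (Nat.zero_le n) hx hg ht

lemma glue_eq_of_mem_Icc (hx : MonotoneOn x (Icc 1 (n + 1)))
    (hg : ∀ k, g k (x (k + 1)) = g (k + 1) (x (k + 1))) {k : ℕ} (hk : 1 ≤ k) (hkn : k ≤ n)
    {t : ℝ} (ht : t ∈ Icc (x k) (x (k + 1))) : glue x g n t = g k t := by
  obtain ⟨k, rfl⟩ := Nat.exists_eq_add_of_le' hk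
  rw [glue_eqOn_Iic_of_le hkn hx hg ht.2, glue_succ_of_le ht.1]

lemma hasPosContDerivOn_glue {g' : ℕ → ℝ → ℝ} (hx : MonotoneOn x (Icc 1 (n + 1)))
    (hg : ∀ k, g k (x (k + 1)) = g (k + 1) (x (k + 1)))
    (hg' : ∀ k, g' k (x (k + 1)) = g' (k + 1) (x (k + 1)))
    (h₀ : HasPosContDerivOn (g 0) (g' 0) (Iic (x 1)))
    (hpiece : ∀ k, 1 ≤ k → k ≤ n → HasPosContDerivOn (g k) (g' k) (Icc (x k) (x (k + 1)))) :
    HasPosContDerivOn (glue x g n) (glue x g' n) (Iic (x (n + 1))) := by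
  induction n with
  | zero => exact h₀
  | succ n ih =>
    have hx' : MonotoneOn x (Icc 1 (n + 1)) := hx.mono (Icc_subset_Icc_right (by omega))
    have hstep : x (n + 1) ≤ x (n + 1 + 1) :=
      hx ⟨by omega, by omega⟩ ⟨by omega, le_rfl⟩ (by omega)
    rw [← Iic_union_Icc_eq_Iic hstep]
    refine .union isClosed_Iic isClosed_Icc ?_ ?_
    · exact (ih hx' fun k hk hkn => hpiece k hk (by omega)).congr
        (glue_succ_eqOn_Iic hx' hg) (glue_succ_eqOn_Iic hx' hg')
    · exact (hpiece (n + 1) (by omega) le_rfl).congr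
        (fun t ht => glue_succ_of_le ht.1) (fun t ht => glue_succ_of_le ht.1)

end Glue

noncomputable def weld (lam x : ℕ → ℝ) : ℕ → ℝ → ℝ := glue x fun k => mev (Phimat lam x k)

section Weld

variable {lam x : ℕ → ℝ} {n : ℕ}

lemma mev_Phimat_succ_self (k : ℕ) :
    mev (Phimat lam x k) (x (k + 1)) = mev (Phimat lam x (k + 1)) (x (k + 1)) :=
  (mev_mul_Tmat_self lam x (k + 1) _).symm

lemma weld_eq_of_le_one (hx : MonotoneOn x (Icc 1 (n + 1))) {t : ℝ} (ht : t ≤ x 1) :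
    weld lam x n t = t :=
  (glue_eq_of_le_one hx mev_Phimat_succ_self ht).trans (mev_one t)

lemma weld_eq_of_mem_Icc (hx : MonotoneOn x (Icc 1 (n + 1))) {k : ℕ} (hk : 1 ≤ k) (hkn : k ≤ n)
    {t : ℝ} (ht : t ∈ Icc (x k) (x (k + 1))) : weld lam x n t = mev (Phimat lam x k) t :=
  glue_eq_of_mem_Icc hx mev_Phimat_succ_self hk hkn ht

lemma hasPosContDerivOn_weld (hx : MonotoneOn x (Icc 1 (n + 1)))
    (hpole : ∀ k, 1 ≤ k → k ≤ n → ∀ t ∈ Icc (x k) (x (k + 1)), mden (Phimat lam x k) t ≠ 0) :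
    HasPosContDerivOn (weld lam x n)
      (glue x (fun k t => (Phimat lam x k).det / mden (Phimat lam x k) t ^ 2) n)
      (Iic (x (n + 1))) := by
  have hdet (k : ℕ) : 0 < (Phimat lam x k).det := by rw [det_Phimat]; exact one_pos
  refine hasPosContDerivOn_glue hx mev_Phimat_succ_self (fun k => ?_) ?_ fun k hk hkn =>
    hasPosContDerivOn_mev (hdet k) (hpole k hk hkn)
  · rw [det_Phimat, det_Phimat]
    exact congrArg (1 / · ^ 2) (mden_mul_Tmat_self lam x (k + 1) _).symm
  · exact hasPosContDerivOn_mev (hdet 0) fun t _ => by simp [Phimat, mden_one]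

end Weld

end PiecewiseMobius

open PiecewiseMobius

theorem piecewise_mobius_construction_characterization_general
    (m : ℕ) (x lam : ℕ → ℝ)
    (hxmono : ∀ i j : ℕ, 1 ≤ i → i < j → j ≤ m → x i < x j)
    (hxneg : x m < 0) (hx0 : x (m + 1) = 0) :
    ((∀ k : ℕ, 1 ≤ k → k ≤ m → ∀ t ∈ Set.Icc (x k) (x (k + 1)),
        (Phimat lam x k) 1 0 * t + (Phimat lam x k) 1 1 ≠ 0)
      ↔ (∀ k : ℕ, 1 ≤ k → k ≤ m →
          (Phimat lam x (k - 1)) 1 0 * x k + (Phimat lam x (k - 1)) 1 1 ≠ 0 ∧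
          lam k < 2 / (x (k + 1) - x k) -
            deriv (deriv (mev (Phimat lam x (k - 1)))) (x k) /
              deriv (mev (Phimat lam x (k - 1))) (x k))) ∧
    ((∀ k : ℕ, 1 ≤ k → k ≤ m → ∀ t ∈ Set.Icc (x k) (x (k + 1)),
        (Phimat lam x k) 1 0 * t + (Phimat lam x k) 1 1 ≠ 0) →
      ∃ Φ : ℝ → ℝ,
        (∀ t : ℝ, t ≤ x 1 → Φ t = t) ∧
        (∀ k : ℕ, 1 ≤ k → k ≤ m → ∀ t ∈ Set.Icc (x k) (x (k + 1)),
          Φ t = mev (Phimat lam x k) t) ∧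
        ContDiffOn ℝ 1 Φ (Set.Iic (0 : ℝ)) ∧
        StrictMonoOn Φ (Set.Iic (0 : ℝ))) := by
  have hx : StrictMonoOn x (Icc 1 (m + 1)) := by
    intro i hi j hj hij
    rcases (mem_Icc.1 hj).2.lt_or_eq with hjm | rfl
    · exact hxmono i j hi.1 hij (by omega)
    rw [hx0]
    rcases (show i ≤ m by omega).lt_or_eq with him | rfl
    · exact (hxmono i m hi.1 him le_rfl).trans hxneg
    · exact hxneg
  have hcriterion : ∀ k, 1 ≤ k → k ≤ m →
      ((∀ t ∈ Icc (x k) (x (k + 1)), mden (Phimat lam x k) t ≠ 0) ↔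
        mden (Phimat lam x (k - 1)) (x k) ≠ 0 ∧
          lam k < 2 / (x (k + 1) - x k) - deriv (deriv (mev (Phimat lam x (k - 1)))) (x k) /
            deriv (mev (Phimat lam x (k - 1))) (x k)) := by
    rintro (_ | k) hk hkm
    · omega
    exact forall_mden_mul_Tmat_ne_zero_iff (by rw [det_Phimat]; exact one_ne_zero)
      (hx ⟨hk, by omega⟩ ⟨by omega, by omega⟩ (by omega))
  refine ⟨forall_congr' fun k => forall_congr' fun hk => forall_congr' (hcriterion k hk),
    fun hpole => ⟨weld lam x m, fun t => weld_eq_of_le_one hx.monotoneOn,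
      fun k hk hkm t => weld_eq_of_mem_Icc hx.monotoneOn hk hkm, ?_⟩⟩
  have hweld := hasPosContDerivOn_weld hx.monotoneOn hpole
  rw [hx0] at hweld
  exact ⟨hweld.contDiffOn (uniqueDiffOn_Iic 0), hweld.strictMonoOn (convex_Iic 0)⟩

/-- **Characterization of the admissible pre-Schwarzian jumps in the piecewise Möbius
welding construction.** Given `x 1 < … < x m < 0`, `x (m+1) = 0` and jumps
`λ 1, …, λ m`, the following are equivalent: (i) for every `k = 1, …, m` the Möbius map
`φ̃_k` has no pole on `[x k, x (k+1)]`; (ii) for every `k = 1, …, m`, `φ̃_{k−1}` is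
finite at `x k` and `λ k < 2/(x (k+1) − x k) − φ̃_{k−1}''(x k)/φ̃_{k−1}′(x k)`.
Moreover, these conditions imply that the map `φ̃` on `(−∞, 0]` equal to the identity on
`(−∞, x 1]` and to `φ̃_k` on `[x k, x (k+1)]` is well defined, continuously
differentiable, and strictly increasing. -/
theorem piecewise_mobius_construction_characterization
    (m : ℕ) (hm : 1 ≤ m) (x lam : ℕ → ℝ)
    (hxmono : ∀ i j : ℕ, 1 ≤ i → i < j → j ≤ m → x i < x j)
    (hxneg : x m < 0) (hx0 : x (m + 1) = 0) :
    ((∀ k : ℕ, 1 ≤ k → k ≤ m → ∀ t ∈ Set.Icc (x k) (x (k + 1)),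
        (Phimat lam x k) 1 0 * t + (Phimat lam x k) 1 1 ≠ 0)
      ↔ (∀ k : ℕ, 1 ≤ k → k ≤ m →
          (Phimat lam x (k - 1)) 1 0 * x k + (Phimat lam x (k - 1)) 1 1 ≠ 0 ∧
          lam k < 2 / (x (k + 1) - x k) -
            deriv (deriv (mev (Phimat lam x (k - 1)))) (x k) /
              deriv (mev (Phimat lam x (k - 1))) (x k))) ∧
    ((∀ k : ℕ, 1 ≤ k → k ≤ m → ∀ t ∈ Set.Icc (x k) (x (k + 1)),
        (Phimat lam x k) 1 0 * t + (Phimat lam x k) 1 1 ≠ 0) →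
      ∃ Φ : ℝ → ℝ,
        (∀ t : ℝ, t ≤ x 1 → Φ t = t) ∧
        (∀ k : ℕ, 1 ≤ k → k ≤ m → ∀ t ∈ Set.Icc (x k) (x (k + 1)),
          Φ t = mev (Phimat lam x k) t) ∧
        ContDiffOn ℝ 1 Φ (Set.Iic (0 : ℝ)) ∧
        StrictMonoOn Φ (Set.Iic (0 : ℝ))) :=
  piecewise_mobius_construction_characterization_general m x lam hxmono hxneg hx0
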